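/- For every α > 0, the third partial derivative of B with respect to η at η = 0 equals B_ηηη(0, α) = −32/105. Consequently, when α = 7.5 (so that B(0,α) = B_η(0,α) = B_ηη(0,α) = 0), one has η · B(η, 7.5) < 0 for all η ≠ 0 with |η| sufficiently small. -/

import Mathlib

open Real MeasureTheory Set Filter

/-- `A k η = ∫_0^1 z^k e^{-η z²} dz`. -/
noncomputable def A (k : ℕ) (η : ℝ) : ℝ :=
  ∫ z in (0:ℝ)..1, z ^ k * Real.exp (-η * z ^ 2)

/-- `B(η, α) = 3 e^{-η} / A₀(η) − (3 − 2η + 4η²/α)`. -/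
noncomputable def B (η α : ℝ) : ℝ :=
  3 * Real.exp (-η) / A 0 η - (3 - 2 * η + 4 * η ^ 2 / α)

/-! The derivatives of `B` are computed from `A_k' = -A_{k+2}` and `A_k(0) = 1/(k+1)`, written in
terms of `Q = e^{-η}/A₀` (`expDivA0`) and `R_k = A_k/A₀` (`momentRatio k`), which satisfy
`Q' = Q (R₂ - 1)` and `R_k' = R_k R₂ - R_{k+2}`. At `α = 7.5` the function `B` vanishes to
second order at `0` and `B_ηηη < 0` near `0`, so three applications of the mean value theorem give
the sign of `η B(η)`. -/

lemma A_pos (η : ℝ) : 0 < A 0 η :=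
  intervalIntegral.intervalIntegral_pos_of_pos_on
    ((by fun_prop : Continuous fun z : ℝ => z ^ 0 * exp (-η * z ^ 2)).intervalIntegrable 0 1)
    (fun _ _ => by positivity) one_pos

lemma A_zero (k : ℕ) : A k 0 = 1 / (k + 1) := by
  simp [A, integral_pow]

lemma hasDerivAt_A (k : ℕ) (η : ℝ) : HasDerivAt (A k) (-A (k + 2) η) η := by
  have hbound : ∀ z ∈ Set.uIoc (0 : ℝ) 1, ∀ x ∈ Metric.ball η 1,
      ‖-(z ^ (k + 2) * exp (-x * z ^ 2))‖ ≤ exp (|η| + 1) := by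
    intro z hz x hx
    rw [uIoc_of_le zero_le_one] at hz
    have hz2 : z ^ 2 ≤ 1 := pow_le_one₀ hz.1.le hz.2
    have hx : |x| ≤ |η| + 1 := by
      have := abs_sub_abs_le_abs_sub x η
      rw [Metric.mem_ball, Real.dist_eq] at hx
      linarith
    have hexp : -x * z ^ 2 ≤ |η| + 1 := by
      nlinarith [neg_le_abs x, abs_nonneg x, sq_nonneg z]
    rw [norm_neg, Real.norm_of_nonneg (by have := hz.1.le; positivity)]
    calc z ^ (k + 2) * exp (-x * z ^ 2) ≤ 1 * exp (|η| + 1) :=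
          mul_le_mul (pow_le_one₀ hz.1.le hz.2) (exp_le_exp.2 hexp) (by positivity) zero_le_one
      _ = exp (|η| + 1) := one_mul _
  have hderiv : ∀ z x : ℝ, HasDerivAt (fun x => z ^ k * exp (-x * z ^ 2))
      (-(z ^ (k + 2) * exp (-x * z ^ 2))) x := by
    intro z x
    refine (((hasDerivAt_neg x).mul_const (z ^ 2)).exp.const_mul (z ^ k)).congr_deriv ?_
    ring
  have key := intervalIntegral.hasDerivAt_integral_of_dominated_loc_of_deriv_le (μ := volume)
    (Metric.ball_mem_nhds η one_pos)
    (Eventually.of_forall fun x => (by fun_prop : Continuous fun z : ℝ =>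
      z ^ k * exp (-x * z ^ 2)).aestronglyMeasurable.restrict)
    ((by fun_prop : Continuous fun z : ℝ => z ^ k * exp (-η * z ^ 2)).intervalIntegrable 0 1)
    (by fun_prop : Continuous fun z : ℝ =>
      -(z ^ (k + 2) * exp (-η * z ^ 2))).aestronglyMeasurable.restrict
    (Eventually.of_forall hbound) intervalIntegrable_const
    (Eventually.of_forall fun z _ x _ => hderiv z x)
  rw [intervalIntegral.integral_neg] at key
  exact key.2

noncomputable def expDivA0 (η : ℝ) : ℝ := exp (-η) / A 0 η

noncomputable def momentRatio (k : ℕ) (η : ℝ) : ℝ := A k η / A 0 η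

lemma expDivA0_zero : expDivA0 0 = 1 := by
  simp [expDivA0, A_zero]

lemma momentRatio_zero (k : ℕ) : momentRatio k 0 = 1 / (k + 1) := by
  simp [momentRatio, A_zero]

lemma hasDerivAt_expDivA0 (η : ℝ) :
    HasDerivAt expDivA0 (expDivA0 η * (momentRatio 2 η - 1)) η := by
  refine ((hasDerivAt_neg η).exp.div (hasDerivAt_A 0 η) (A_pos η).ne').congr_deriv ?_
  have := (A_pos η).ne'
  simp only [expDivA0, momentRatio]
  field_simp
  ring

lemma hasDerivAt_momentRatio (k : ℕ) (η : ℝ) :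
    HasDerivAt (momentRatio k)
      (momentRatio k η * momentRatio 2 η - momentRatio (k + 2) η) η := by
  refine ((hasDerivAt_A k η).div (hasDerivAt_A 0 η) (A_pos η).ne').congr_deriv ?_
  have := (A_pos η).ne'
  simp only [momentRatio]
  field_simp
  ring

noncomputable def Bη (η α : ℝ) : ℝ :=
  3 * expDivA0 η * (momentRatio 2 η - 1) + 2 - 8 * η / α

noncomputable def Bηη (η α : ℝ) : ℝ :=
  3 * expDivA0 η * ((momentRatio 2 η - 1) ^ 2 + momentRatio 2 η ^ 2 - momentRatio 4 η) - 8 / α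

noncomputable def Bηηη (η : ℝ) : ℝ :=
  3 * expDivA0 η *
    ((momentRatio 2 η - 1) * ((momentRatio 2 η - 1) ^ 2 + momentRatio 2 η ^ 2 - momentRatio 4 η)
      + (4 * momentRatio 2 η - 2) * (momentRatio 2 η ^ 2 - momentRatio 4 η)
      + momentRatio 6 η - momentRatio 2 η * momentRatio 4 η)

section derivatives

variable (α : ℝ)

lemma hasDerivAt_B (η : ℝ) : HasDerivAt (fun η => B η α) (Bη η α) η := by
  have hB : (fun η => B η α) = fun η => 3 * expDivA0 η - (3 - 2 * η + 4 * η ^ 2 / α) := by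
    funext η
    simp only [B, expDivA0, mul_div_assoc]
  rw [hB]
  refine (((hasDerivAt_expDivA0 η).const_mul 3).sub
    ((((hasDerivAt_id η).const_mul 2).const_sub 3).add
      (((hasDerivAt_pow 2 η).const_mul 4).div_const α))).congr_deriv ?_
  simp only [Bη]
  ring

lemma hasDerivAt_Bη (η : ℝ) : HasDerivAt (fun η => Bη η α) (Bηη η α) η := by
  have h2 := hasDerivAt_momentRatio 2 η
  refine (((((hasDerivAt_expDivA0 η).const_mul 3).mul (h2.sub_const 1)).add_const 2).sub
    (((hasDerivAt_id η).const_mul 8).div_const α)).congr_deriv ?_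
  simp only [Bηη]
  ring

lemma hasDerivAt_Bηη (η : ℝ) : HasDerivAt (fun η => Bηη η α) (Bηηη η) η := by
  have h2 := hasDerivAt_momentRatio 2 η
  have h4 := hasDerivAt_momentRatio 4 η
  refine ((((hasDerivAt_expDivA0 η).const_mul 3).mul
    ((((h2.sub_const 1).pow 2).add (h2.pow 2)).sub h4)).sub_const (8 / α)).congr_deriv ?_
  simp only [Bηηη, Pi.add_apply, Pi.sub_apply, Pi.pow_apply]
  ring

lemma iteratedDeriv_three_B : iteratedDeriv 3 (fun η => B η α) = Bηηη := by
  have d1 : deriv (fun η => B η α) = fun η => Bη η α := funext fun η => (hasDerivAt_B α η).deriv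
  have d2 : deriv (fun η => Bη η α) = fun η => Bηη η α :=
    funext fun η => (hasDerivAt_Bη α η).deriv
  have d3 : deriv (fun η => Bηη η α) = Bηηη := funext fun η => (hasDerivAt_Bηη α η).deriv
  rw [iteratedDeriv_eq_iterate]
  simp only [Function.iterate_succ, Function.iterate_zero, Function.comp_apply, id, d1, d2, d3]

lemma B_zero : B 0 α = 0 := by
  norm_num [B, A_zero]

lemma Bη_zero : Bη 0 α = 0 := by
  norm_num [Bη, expDivA0_zero, momentRatio_zero]

end derivatives

lemma Bηη_zero_seven_half : Bηη 0 7.5 = 0 := by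
  norm_num [Bηη, expDivA0_zero, momentRatio_zero]

lemma Bηηη_zero : Bηηη 0 = -(32 / 105) := by
  norm_num [Bηηη, expDivA0_zero, momentRatio_zero]

lemma continuous_Bηηη : Continuous Bηηη := by
  have hQ : Continuous expDivA0 := continuous_iff_continuousAt.2 fun η =>
    (hasDerivAt_expDivA0 η).continuousAt
  have hR (k : ℕ) : Continuous (momentRatio k) := continuous_iff_continuousAt.2 fun η =>
    (hasDerivAt_momentRatio k η).continuousAt
  unfold Bηηη
  fun_prop

section meanValue

variable {f f' : ℝ → ℝ} {δ : ℝ}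

lemma exists_mul_pos_abs_lt_sub_eq_deriv_mul {x : ℝ} (hf : ∀ y, HasDerivAt f (f' y) y)
    (hx : x ≠ 0) : ∃ c, 0 < c * x ∧ |c| < |x| ∧ f x - f 0 = f' c * x := by
  have hfc : Continuous f := continuous_iff_continuousAt.2 fun y => (hf y).continuousAt
  rcases hx.lt_or_gt with hneg | hpos
  · obtain ⟨c, ⟨hxc, hc0⟩, hc⟩ :=
      exists_hasDerivAt_eq_slope f f' hneg hfc.continuousOn fun y _ => hf y
    refine ⟨c, by nlinarith, by rw [abs_of_neg hc0, abs_of_neg hneg]; linarith, ?_⟩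
    rw [hc]
    field_simp
    ring
  · obtain ⟨c, ⟨h0c, hcx⟩, hc⟩ :=
      exists_hasDerivAt_eq_slope f f' hpos hfc.continuousOn fun y _ => hf y
    refine ⟨c, by positivity, by rw [abs_of_pos h0c, abs_of_pos hpos]; exact hcx, ?_⟩
    rw [hc]
    field_simp
    ring

lemma mul_neg_of_deriv_neg (hf : ∀ y, HasDerivAt f (f' y) y) (h0 : f 0 = 0)
    (hneg : ∀ y, y ≠ 0 → |y| < δ → f' y < 0) : ∀ x, x ≠ 0 → |x| < δ → x * f x < 0 := by
  intro x hx hxδ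
  obtain ⟨c, hcx, hc, hfx⟩ := exists_mul_pos_abs_lt_sub_eq_deriv_mul hf hx
  have hc0 : c ≠ 0 := by rintro rfl; simp at hcx
  rw [h0, sub_zero] at hfx
  rw [hfx]
  nlinarith [hneg c hc0 (hc.trans hxδ), mul_self_pos.2 hx]

lemma neg_of_mul_deriv_neg (hf : ∀ y, HasDerivAt f (f' y) y) (h0 : f 0 = 0)
    (hneg : ∀ y, y ≠ 0 → |y| < δ → y * f' y < 0) : ∀ x, x ≠ 0 → |x| < δ → f x < 0 := by
  intro x hx hxδ
  obtain ⟨c, hcx, hc, hfx⟩ := exists_mul_pos_abs_lt_sub_eq_deriv_mul hf hx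
  have hc0 : c ≠ 0 := by rintro rfl; simp at hcx
  rw [h0, sub_zero] at hfx
  have hprod : c * x * (c * f' c) < 0 := mul_neg_of_pos_of_neg hcx (hneg c hc0 (hc.trans hxδ))
  rw [hfx]
  nlinarith [mul_self_pos.2 hc0]

end meanValue

/-- For every `α > 0`, `B_ηηη(0, α) = −32/105`; consequently for `α = 7.5` one
has `η · B(η, 7.5) < 0` for all `η ≠ 0` with `|η|` sufficiently small. -/
theorem stmt_10 :
    (∀ α : ℝ, 0 < α → iteratedDeriv 3 (fun η : ℝ => B η α) 0 = -(32 / 105)) ∧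
    (∃ δ : ℝ, 0 < δ ∧ ∀ η : ℝ, η ≠ 0 → |η| < δ → η * B η 7.5 < 0) := by
  refine ⟨fun α _ => by rw [iteratedDeriv_three_B, Bηηη_zero], ?_⟩
  obtain ⟨δ, hδ, hneg⟩ := Metric.eventually_nhds_iff.1 <|
    continuous_Bηηη.continuousAt.eventually_lt continuousAt_const
      (show Bηηη 0 < 0 by rw [Bηηη_zero]; norm_num)
  simp only [Real.dist_0_eq_abs] at hneg
  have hBηη := mul_neg_of_deriv_neg (hasDerivAt_Bηη 7.5) Bηη_zero_seven_half
    fun y _ hy => hneg hy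
  have hBη := neg_of_mul_deriv_neg (hasDerivAt_Bη 7.5) (Bη_zero 7.5) hBηη
  exact ⟨δ, hδ, mul_neg_of_deriv_neg (hasDerivAt_B 7.5) (B_zero 7.5) hBη⟩
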